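/- arXiv:2111.11613 — 5 statements merged into one kernel-verified Lean document; each statement's English description precedes it below -/
import Mathlib

section
/- With the estimate sequence φ_k defined by φ_0(x) = f(x_0) + (γ_0/2)‖x-x_0‖² and φ_{k+1}(x) = (1-θ_k)φ_k(x) + θ_k[f(x̄_k) + ∇f(x̄_k)ᵀ(x-x̄_k) + (ℓ/2)‖x-x̄_k‖²], writing φ_k(x) = φ_k* + (γ_k/2)‖x - v_k‖², the minimizer and minimum value satisfy the recurrences: γ_{k+1} = (1-θ_k)γ_k + θ_kℓ, v_{k+1} = [(1-θ_k)γ_k v_k + θ_kℓ x̄_k - θ_k∇f(x̄_k)]/γ_{k+1}, and φ_{k+1}* = (1-θ_k)φ_k* + θ_k f(x̄_k) - (θ_k²/(2γ_{k+1}))‖∇f(x̄_k)‖² + (θ_k(1-θ_k)γ_k/γ_{k+1})(ℓ‖x̄_k - v_k‖²/2 + ∇f(x̄_k)ᵀ(v_k - x̄_k)). -/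
open RealInnerProductSpace

/-!
The right-hand side of the recursion for `φ_{k+1}` is a quadratic whose quadratic part is
`((1-θ_k)γ_k + θ_k ℓ)/2 ‖x‖² = γ_{k+1}/2 ‖x‖²`; completing the square writes it as
`Φ + γ_{k+1}/2 ‖x - V‖²` with `V`, `Φ` the claimed expressions. A function `c + a/2 ‖x - v‖²`
with `a ≠ 0` determines `v` and `c` (compare its values at the two candidate centres), so
`v_{k+1} = V` and `φ_{k+1}* = Φ`.
-/

theorem eq_and_eq_of_forall_add_half_mul_norm_sub_sq_eq {E : Type*} [NormedAddCommGroup E]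
    {a c c' : ℝ} {v v' : E} (ha : a ≠ 0)
    (h : ∀ x, c + a / 2 * ‖x - v‖ ^ 2 = c' + a / 2 * ‖x - v'‖ ^ 2) : v = v' ∧ c = c' := by
  have hv := h v
  have hv' := h v'
  rw [sub_self, norm_zero] at hv hv'
  rw [norm_sub_rev] at hv'
  have hdist : ‖v - v'‖ ^ 2 = 0 := by
    apply mul_left_cancel₀ ha
    linear_combination hv' - hv
  obtain rfl : v = v' := sub_eq_zero.mp (norm_eq_zero.mp (pow_eq_zero_iff two_ne_zero |>.mp hdist))
  simpa using hv

section

variable {E : Type*} [NormedAddCommGroup E] [InnerProductSpace ℝ E]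

theorem half_mul_norm_sub_sq_add_half_mul_norm_sq_add_inner {A b : ℝ} (hab : A + b ≠ 0)
    (u p w : E) :
    A / 2 * ‖u - p‖ ^ 2 + b / 2 * ‖u‖ ^ 2 + ⟪w, u⟫ =
      -‖w‖ ^ 2 / (2 * (A + b)) + A / (A + b) * (b * ‖p‖ ^ 2 / 2 + ⟪w, p⟫)
        + (A + b) / 2 * ‖u - (A + b)⁻¹ • (A • p - w)‖ ^ 2 := by
  have hz : ‖A • p - w‖ ^ 2 = A ^ 2 * ‖p‖ ^ 2 - 2 * A * ⟪w, p⟫ + ‖w‖ ^ 2 := by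
    rw [norm_sub_sq_real, norm_smul, mul_pow, Real.norm_eq_abs, sq_abs, real_inner_smul_left,
      real_inner_comm]
    ring
  rw [norm_sub_sq_real u p, norm_sub_sq_real u, norm_smul, mul_pow, hz, real_inner_smul_right,
    inner_sub_right, real_inner_smul_right, Real.norm_eq_abs, sq_abs, real_inner_comm w u,
    real_inner_comm p u]
  field_simp
  ring

-- `c = φ_k*`, `y = x̄_k`, `fy = f(x̄_k)`, `g = ∇f(x̄_k)`
theorem estimateSeq_step_eq_canonical {θ γ ℓ c fy : ℝ} (hγ : (1 - θ) * γ + θ * ℓ ≠ 0)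
    (v y g x : E) :
    (1 - θ) * (c + γ / 2 * ‖x - v‖ ^ 2) + θ * (fy + ⟪g, x - y⟫ + ℓ / 2 * ‖x - y‖ ^ 2) =
      ((1 - θ) * c + θ * fy - θ ^ 2 / (2 * ((1 - θ) * γ + θ * ℓ)) * ‖g‖ ^ 2
        + (θ * (1 - θ) * γ / ((1 - θ) * γ + θ * ℓ)) * (ℓ * ‖y - v‖ ^ 2 / 2 + ⟪g, v - y⟫))
      + ((1 - θ) * γ + θ * ℓ) / 2 * ‖x - ((1 - θ) * γ + θ * ℓ)⁻¹ •
          (((1 - θ) * γ) • v + (θ * ℓ) • y - θ • g)‖ ^ 2 := by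
  -- complete the square in the variable `x - y`, centred at `x̄_k`
  have hsq := half_mul_norm_sub_sq_add_half_mul_norm_sq_add_inner hγ (x - y) (v - y) (θ • g)
  have hshift : x - y - ((1 - θ) * γ + θ * ℓ)⁻¹ • (((1 - θ) * γ) • (v - y) - θ • g) =
      x - ((1 - θ) * γ + θ * ℓ)⁻¹ • (((1 - θ) * γ) • v + (θ * ℓ) • y - θ • g) := by
    rw [sub_sub, sub_right_inj]
    nth_rewrite 1 [← inv_smul_smul₀ hγ y]
    rw [← smul_add]
    congr 1
    module
  rw [sub_sub_sub_cancel_right, hshift, norm_smul, Real.norm_eq_abs, mul_pow, sq_abs,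
    real_inner_smul_left, real_inner_smul_left] at hsq
  rw [norm_sub_rev y v]
  linear_combination hsq

end

theorem stmt_6_general (n : ℕ) (f : EuclideanSpace ℝ (Fin n) → ℝ)
    (g : EuclideanSpace ℝ (Fin n) → EuclideanSpace ℝ (Fin n))
    (ℓ : ℝ)
    (θ : ℕ → ℝ)
    (xbar : ℕ → EuclideanSpace ℝ (Fin n))
    (γ : ℕ → ℝ) (v : ℕ → EuclideanSpace ℝ (Fin n)) (φstar : ℕ → ℝ)
    (φ : ℕ → EuclideanSpace ℝ (Fin n) → ℝ)
    (hγpos : ∀ k, 0 < γ k)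
    (hγrec : ∀ k, γ (k + 1) = (1 - θ k) * γ k + θ k * ℓ)
    (hφrec : ∀ k x, φ (k + 1) x = (1 - θ k) * φ k x +
      θ k * (f (xbar k) + ⟪g (xbar k), x - xbar k⟫ + ℓ / 2 * ‖x - xbar k‖ ^ 2))
    (hrep : ∀ k x, φ k x = φstar k + γ k / 2 * ‖x - v k‖ ^ 2) :
    ∀ k, v (k + 1) = (γ (k + 1))⁻¹ •
        (((1 - θ k) * γ k) • v k + (θ k * ℓ) • xbar k - (θ k) • g (xbar k)) ∧
      φstar (k + 1) = (1 - θ k) * φstar k + θ k * f (xbar k)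
        - (θ k) ^ 2 / (2 * γ (k + 1)) * ‖g (xbar k)‖ ^ 2
        + (θ k * (1 - θ k) * γ k / γ (k + 1)) *
            (ℓ * ‖xbar k - v k‖ ^ 2 / 2 + ⟪g (xbar k), v k - xbar k⟫) := by
  intro k
  have hγ : (1 - θ k) * γ k + θ k * ℓ ≠ 0 := hγrec k ▸ (hγpos (k + 1)).ne'
  rw [hγrec k]
  refine eq_and_eq_of_forall_add_half_mul_norm_sub_sq_eq hγ fun x => ?_
  have hstep := estimateSeq_step_eq_canonical (c := φstar k) (fy := f (xbar k)) hγ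
    (v k) (xbar k) (g (xbar k)) x
  rwa [← hrep k x, ← hφrec, hrep, hγrec] at hstep

theorem stmt_6 (n : ℕ) (f : EuclideanSpace ℝ (Fin n) → ℝ)
    (g : EuclideanSpace ℝ (Fin n) → EuclideanSpace ℝ (Fin n))
    (hgrad : ∀ x, HasGradientAt f (g x) x)
    (ℓ : ℝ) (hℓ : 0 ≤ ℓ)
    (θ : ℕ → ℝ) (hθ : ∀ k, 0 < θ k ∧ θ k < 1)
    (xbar : ℕ → EuclideanSpace ℝ (Fin n))
    (γ : ℕ → ℝ) (v : ℕ → EuclideanSpace ℝ (Fin n)) (φstar : ℕ → ℝ)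
    (φ : ℕ → EuclideanSpace ℝ (Fin n) → ℝ)
    (hγpos : ∀ k, 0 < γ k)
    (hγrec : ∀ k, γ (k + 1) = (1 - θ k) * γ k + θ k * ℓ)
    (hφrec : ∀ k x, φ (k + 1) x = (1 - θ k) * φ k x +
      θ k * (f (xbar k) + ⟪g (xbar k), x - xbar k⟫ + ℓ / 2 * ‖x - xbar k‖ ^ 2))
    (hrep : ∀ k x, φ k x = φstar k + γ k / 2 * ‖x - v k‖ ^ 2) :
    ∀ k, v (k + 1) = (γ (k + 1))⁻¹ •
        (((1 - θ k) * γ k) • v k + (θ k * ℓ) • xbar k - (θ k) • g (xbar k)) ∧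
      φstar (k + 1) = (1 - θ k) * φstar k + θ k * f (xbar k)
        - (θ k) ^ 2 / (2 * γ (k + 1)) * ‖g (xbar k)‖ ^ 2
        + (θ k * (1 - θ k) * γ k / γ (k + 1)) *
            (ℓ * ‖xbar k - v k‖ ^ 2 / 2 + ⟪g (xbar k), v k - xbar k⟫) :=
  stmt_6_general n f g ℓ θ xbar γ v φstar φ hγpos hγrec hφrec hrep
end

section
/- (Nesterov's estimate-sequence theorem) Let f be an L-smooth, ℓ-strongly convex function (ℓ ≥ 0) with minimizer x* and minimum f*. Let φ_k be the estimate sequence with φ_0(x) = f(x_0) + (L/2)‖x - x_0‖², θ_k the positive root of Lθ² + (γ_k - ℓ)θ - γ_k = 0, γ_0 = L, γ_{k+1} = (1-θ_k)γ_k + θ_kℓ. If iterates x_k satisfy f(x_k) ≤ φ_k* := min_x φ_k(x) for all k, then f(x_k) - f* ≤ L · min((1 - √(ℓ/L))^k, 4/(k+2)²) · ‖x_0 - x*‖². -/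
open RealInnerProductSpace

set_option maxHeartbeats 1000000

theorem stmt_7 (n : ℕ) (f : EuclideanSpace ℝ (Fin n) → ℝ)
    (g : EuclideanSpace ℝ (Fin n) → EuclideanSpace ℝ (Fin n))
    (L ℓ : ℝ) (hL : 0 < L) (hℓ : 0 ≤ ℓ) (hℓL : ℓ ≤ L)
    (hgrad : ∀ x, HasGradientAt f (g x) x)
    (hconv : ConvexOn ℝ Set.univ f)
    (hsmooth : ∀ x y, f y - f x - ⟪g x, y - x⟫ ≤ L / 2 * ‖y - x‖ ^ 2)
    (hstrong : ∀ x y, ℓ / 2 * ‖y - x‖ ^ 2 ≤ f y - f x - ⟪g x, y - x⟫)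
    (xstar : EuclideanSpace ℝ (Fin n)) (hmin : ∀ y, f xstar ≤ f y)
    (x xbar : ℕ → EuclideanSpace ℝ (Fin n))
    (θ γ : ℕ → ℝ)
    (hγ0 : γ 0 = L)
    (hθ : ∀ k, 0 < θ k ∧ L * θ k ^ 2 + (γ k - ℓ) * θ k - γ k = 0)
    (hγrec : ∀ k, γ (k + 1) = (1 - θ k) * γ k + θ k * ℓ)
    (φ : ℕ → EuclideanSpace ℝ (Fin n) → ℝ)
    (hφ0 : ∀ z, φ 0 z = f (x 0) + L / 2 * ‖z - x 0‖ ^ 2)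
    (hφrec : ∀ k z, φ (k + 1) z = (1 - θ k) * φ k z +
      θ k * (f (xbar k) + ⟪g (xbar k), z - xbar k⟫ + ℓ / 2 * ‖z - xbar k‖ ^ 2))
    (φstar : ℕ → ℝ)
    (hφstar : ∀ k, (∀ z, φstar k ≤ φ k z) ∧ ∃ z, φ k z = φstar k)
    (hx : ∀ k, f (x k) ≤ φstar k) :
    ∀ k : ℕ, f (x k) - f xstar ≤
      L * min ((1 - Real.sqrt (ℓ / L)) ^ k) (4 / ((k : ℝ) + 2) ^ 2) * ‖x 0 - xstar‖ ^ 2 := by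
  set lam : ℕ → ℝ := fun k => ∏ i ∈ Finset.range k, (1 - θ i) with hlamdef
  have hlam0 : lam 0 = 1 := by simp [hlamdef]
  have hlamrec : ∀ k, lam (k + 1) = lam k * (1 - θ k) := fun k =>
    Finset.prod_range_succ _ _
  -- positivity of γ
  have hγeq : ∀ k, γ (k + 1) = L * θ k ^ 2 := by
    intro k
    have h := (hθ k).2
    rw [hγrec k]; nlinarith
  have hγpos : ∀ k, 0 < γ k := by
    intro k
    cases k with
    | zero => rw [hγ0]; exact hL
    | succ k =>
      rw [hγeq k]
      have := (hθ k).1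
      positivity
  have hθle1 : ∀ k, θ k ≤ 1 := by
    intro k
    by_contra hgt
    push_neg at hgt
    have h := (hθ k).2
    have hγ := hγpos k
    have hA : 0 < L * θ k - ℓ := by nlinarith [mul_pos hL (sub_pos.mpr hgt)]
    have hB := mul_pos (hθ k).1 hA
    have hC := mul_pos hγ (sub_pos.mpr hgt)
    nlinarith [hB, hC]
  have hγgeℓ : ∀ k, ℓ ≤ γ k := by
    intro k
    induction k with
    | zero => rw [hγ0]; exact hℓL
    | succ k ih =>
      rw [hγrec k]
      nlinarith [(hθ k).1, hθle1 k]
  have hθge : ∀ k, Real.sqrt (ℓ / L) ≤ θ k := by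
    intro k
    have h1 : ℓ ≤ L * θ k ^ 2 := by rw [← hγeq k]; exact hγgeℓ (k + 1)
    have h2 : ℓ / L ≤ θ k ^ 2 := by
      rw [div_le_iff₀ hL]; nlinarith
    calc Real.sqrt (ℓ / L) ≤ Real.sqrt (θ k ^ 2) := Real.sqrt_le_sqrt h2
      _ = θ k := Real.sqrt_sq (hθ k).1.le
  have hsqrt1 : Real.sqrt (ℓ / L) ≤ 1 := by
    rw [show (1 : ℝ) = Real.sqrt 1 by simp]
    apply Real.sqrt_le_sqrt
    rw [div_le_one hL]; exact hℓL
  have hlamnn : ∀ k, 0 ≤ lam k := by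
    intro k
    apply Finset.prod_nonneg
    intro i _
    have := hθle1 i; linarith
  have hlamle : ∀ k, lam k ≤ (1 - Real.sqrt (ℓ / L)) ^ k := by
    intro k
    induction k with
    | zero => simp [hlam0]
    | succ k ih =>
      rw [hlamrec k, pow_succ]
      apply mul_le_mul ih _ _ _
      · have := hθge k; linarith
      · have := hθle1 k; linarith
      · exact pow_nonneg (by linarith) k
  have hγgelam : ∀ k, lam k * L ≤ γ k := by
    intro k
    induction k with
    | zero => rw [hlam0, hγ0]; simp
    | succ k ih =>
      rw [hγrec k, hlamrec k]
      have h1 := (hθ k).1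
      have h2 := hθle1 k
      nlinarith
  have hθgelam : ∀ k, Real.sqrt (lam (k + 1)) ≤ θ k := by
    intro k
    have h1 : lam (k + 1) ≤ θ k ^ 2 := by
      have := hγgelam (k + 1)
      rw [hγeq k] at this
      nlinarith
    calc Real.sqrt (lam (k + 1)) ≤ Real.sqrt (θ k ^ 2) := Real.sqrt_le_sqrt h1
      _ = θ k := Real.sqrt_sq (hθ k).1.le
  have hsq : ∀ k : ℕ, Real.sqrt (lam k) ≤ 2 / ((k : ℝ) + 2) := by
    intro k
    induction k with
    | zero => simp [hlam0]
    | succ k ih =>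
      set s := Real.sqrt (lam (k + 1)) with hs
      set t := Real.sqrt (lam k) with ht
      have hs0 : 0 ≤ s := Real.sqrt_nonneg _
      have ht0 : 0 ≤ t := Real.sqrt_nonneg _
      have hK : (0 : ℝ) ≤ (k : ℝ) := Nat.cast_nonneg k
      have hstep : s ≤ θ k := hθgelam k
      have hlamle' : lam (k + 1) ≤ (1 - s) * lam k := by
        rw [hlamrec k]
        nlinarith [hlamnn k]
      have hineq : s ^ 2 ≤ (1 - s) * t ^ 2 := by
        rw [show t ^ 2 = lam k from Real.sq_sqrt (hlamnn k),
          show s ^ 2 = lam (k + 1) from Real.sq_sqrt (hlamnn (k + 1))]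
        exact hlamle'
      by_contra hgt
      push_neg at hgt
      push_cast at hgt
      have he : ((k : ℝ) + 1 + 2) = (k : ℝ) + 3 := by ring
      rw [he] at hgt
      have hd3 : (0 : ℝ) < (k : ℝ) + 3 := by linarith
      have hd2 : (0 : ℝ) < (k : ℝ) + 2 := by linarith
      have hs' : 2 < s * ((k : ℝ) + 3) := by
        have := (div_lt_iff₀ hd3).mp hgt; linarith
      have ht' : t * ((k : ℝ) + 2) ≤ 2 := (le_div_iff₀ hd2).mp ih
      have p1 : 4 < s ^ 2 * ((k : ℝ) + 3) ^ 2 := by nlinarith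
      have p2 : 2 * t ^ 2 ≤ s * t ^ 2 * ((k : ℝ) + 3) := by nlinarith [sq_nonneg t]
      have p2' := mul_le_mul_of_nonneg_right p2 hd3.le
      have p3 : t ^ 2 * ((k : ℝ) + 2) ^ 2 ≤ 4 := by
        nlinarith [mul_le_mul ht' ht' (mul_nonneg ht0 hd2.le) (by norm_num : (0:ℝ) ≤ 2)]
      have h4 := mul_le_mul_of_nonneg_right hineq (sq_nonneg ((k : ℝ) + 3))
      linarith [p1, p2', p3, h4, sq_nonneg t]
  -- g xstar = 0
  have hg0 : g xstar = 0 := by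
    have h1 := hsmooth xstar (xstar - (1 / L) • g xstar)
    have h2 := hmin (xstar - (1 / L) • g xstar)
    have e1 : xstar - (1 / L) • g xstar - xstar = -((1 / L) • g xstar) := by
      abel
    rw [e1] at h1
    have e2 : ⟪g xstar, -((1 / L) • g xstar)⟫ = -(1 / L) * ‖g xstar‖ ^ 2 := by
      rw [inner_neg_right, real_inner_smul_right, real_inner_self_eq_norm_sq]
      ring
    have e3 : ‖-((1 / L) • g xstar)‖ ^ 2 = (1 / L) ^ 2 * ‖g xstar‖ ^ 2 := by
      rw [norm_neg, norm_smul]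
      rw [Real.norm_eq_abs, abs_of_pos (by positivity : (0:ℝ) < 1 / L)]
      ring
    rw [e2, e3] at h1
    have hLi : 0 < 1 / L := by positivity
    have hLL : L / 2 * ((1 / L) ^ 2 * ‖g xstar‖ ^ 2) = (1 / L) / 2 * ‖g xstar‖ ^ 2 := by
      field_simp
    rw [hLL] at h1
    have hgn : ‖g xstar‖ ^ 2 ≤ 0 := by
      by_contra hpos
      push_neg at hpos
      have := mul_pos (half_pos hLi) hpos
      linarith
    have h0 : ‖g xstar‖ ^ 2 = 0 := le_antisymm hgn (sq_nonneg _)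
    exact norm_eq_zero.mp (pow_eq_zero_iff two_ne_zero |>.mp h0)
  have hD : 0 ≤ φ 0 xstar - f xstar := by
    rw [hφ0]
    have hn : 0 ≤ L / 2 * ‖xstar - x 0‖ ^ 2 := by positivity
    linarith [hmin (x 0)]
  have hkey : ∀ k, φ k xstar - f xstar ≤ lam k * (φ 0 xstar - f xstar) := by
    intro k
    induction k with
    | zero => rw [hlam0]; linarith
    | succ k ih =>
      rw [hφrec k xstar, hlamrec k]
      have hstr := hstrong (xbar k) xstar
      have hθp := (hθ k).1
      have hθ1 := hθle1 k
      have h1 : θ k * (ℓ / 2 * ‖xstar - xbar k‖ ^ 2) ≤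
          θ k * (f xstar - f (xbar k) - ⟪g (xbar k), xstar - xbar k⟫) :=
        mul_le_mul_of_nonneg_left hstr hθp.le
      have h2 : (1 - θ k) * (φ k xstar - f xstar) ≤
          (1 - θ k) * (lam k * (φ 0 xstar - f xstar)) :=
        mul_le_mul_of_nonneg_left ih (by linarith)
      nlinarith
  have hfx0 : f (x 0) - f xstar ≤ L / 2 * ‖x 0 - xstar‖ ^ 2 := by
    have h := hsmooth xstar (x 0)
    rw [hg0] at h
    simp only [inner_zero_left] at h
    linarith
  have hDle : φ 0 xstar - f xstar ≤ L * ‖x 0 - xstar‖ ^ 2 := by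
    rw [hφ0]
    have hrev : ‖xstar - x 0‖ = ‖x 0 - xstar‖ := norm_sub_rev _ _
    rw [hrev]
    linarith
  intro k
  have h1 : f (x k) - f xstar ≤ lam k * (L * ‖x 0 - xstar‖ ^ 2) := by
    have ha := hx k
    have hb := (hφstar k).1 xstar
    have hc := hkey k
    have hd := mul_le_mul_of_nonneg_left hDle (hlamnn k)
    linarith
  have h2 : lam k ≤ min ((1 - Real.sqrt (ℓ / L)) ^ k) (4 / ((k : ℝ) + 2) ^ 2) := by
    apply le_min (hlamle k)
    have hk2 : (0 : ℝ) < (k : ℝ) + 2 := by positivity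
    have hsk := hsq k
    have : lam k = Real.sqrt (lam k) ^ 2 := (Real.sq_sqrt (hlamnn k)).symm
    rw [this]
    calc Real.sqrt (lam k) ^ 2 ≤ (2 / ((k : ℝ) + 2)) ^ 2 :=
          pow_le_pow_left₀ (Real.sqrt_nonneg _) hsk 2
      _ = 4 / ((k : ℝ) + 2) ^ 2 := by rw [div_pow]; norm_num
  have hC : 0 ≤ L * ‖x 0 - xstar‖ ^ 2 := by positivity
  calc f (x k) - f xstar ≤ lam k * (L * ‖x 0 - xstar‖ ^ 2) := h1
    _ ≤ min ((1 - Real.sqrt (ℓ / L)) ^ k) (4 / ((k : ℝ) + 2) ^ 2) *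
        (L * ‖x 0 - xstar‖ ^ 2) := mul_le_mul_of_nonneg_right h2 hC
    _ = L * min ((1 - Real.sqrt (ℓ / L)) ^ k) (4 / ((k : ℝ) + 2) ^ 2) *
        ‖x 0 - xstar‖ ^ 2 := by ring
end

section
/- Let f(x) = xᵀAx/2 - bᵀx with A symmetric positive definite, and let x_0, x_1, x_2, … be the iterates of linear conjugate gradient started at x_0. Then the gradient ∇f(x_k) = Ax_k - b is orthogonal to every vector in span{∇f(x_0), …, ∇f(x_{k-1})}. -/
open RealInnerProductSpace

theorem stmt_8 (n : ℕ)
    (A : EuclideanSpace ℝ (Fin n) →ₗ[ℝ] EuclideanSpace ℝ (Fin n))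
    (b : EuclideanSpace ℝ (Fin n))
    (hsym : ∀ x y, ⟪A x, y⟫ = ⟪x, A y⟫)
    (hpd : ∀ x, x ≠ 0 → 0 < ⟪x, A x⟫)
    (f : EuclideanSpace ℝ (Fin n) → ℝ)
    (hf : ∀ x, f x = ⟪x, A x⟫ / 2 - ⟪b, x⟫)
    (x : ℕ → EuclideanSpace ℝ (Fin n))
    (hmem : ∀ k, x k - x 0 ∈ Submodule.span ℝ {w | ∃ i < k, w = A (x i) - b})
    (hmin : ∀ k y, y - x 0 ∈ Submodule.span ℝ {w | ∃ i < k, w = A (x i) - b} →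
      f (x k) ≤ f y) :
    ∀ k, ∀ w ∈ Submodule.span ℝ {w | ∃ i < k, w = A (x i) - b},
      ⟪A (x k) - b, w⟫ = 0 := by
  intro k w hw
  set c : ℝ := ⟪A (x k) - b, w⟫ with hc
  set e : ℝ := ⟪w, A w⟫ with he
  have key : ∀ t : ℝ, 0 ≤ t * c + t ^ 2 * (e / 2) := by
    intro t
    have hmem' : (x k + t • w) - x 0 ∈
        Submodule.span ℝ {w | ∃ i < k, w = A (x i) - b} := by
      have h1 : (x k + t • w) - x 0 = (x k - x 0) + t • w := by abel
      rw [h1]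
      exact Submodule.add_mem _ (hmem k) (Submodule.smul_mem _ _ hw)
    have h := hmin k _ hmem'
    have hA : A (x k + t • w) = A (x k) + t • A w := by
      simp [map_add, map_smul]
    have expand : f (x k + t • w) = f (x k) + t * c + t ^ 2 * (e / 2) := by
      rw [hf, hf, hA]
      have h1 : ⟪A (x k), w⟫ = ⟪x k, A w⟫ := hsym _ _
      have h2 : ⟪w, A (x k)⟫ = ⟪A (x k), w⟫ := real_inner_comm _ _
      simp only [hc, he, inner_add_left, inner_add_right, inner_smul_left,
        inner_smul_right, inner_sub_left, conj_trivial]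
      rw [h2, h1]
      ring
    rw [expand] at h
    linarith
  by_cases hw0 : w = 0
  · simp [hc, hw0]
  · have hd : 0 < e := hpd w hw0
    have h1 := key (-(c / e))
    have h2 : -(c / e) * c + (-(c / e)) ^ 2 * (e / 2) = -(c ^ 2) / (2 * e) := by
      field_simp
      ring
    rw [h2] at h1
    have : c ^ 2 ≤ 0 := by
      by_contra hcon
      push_neg at hcon
      have : -(c ^ 2) / (2 * e) < 0 := div_neg_of_neg_of_pos (by linarith) (by linarith)
      linarith
    have := sq_nonneg c
    have hc2 : c ^ 2 = 0 := le_antisymm ‹c ^ 2 ≤ 0› (sq_nonneg c)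
    exact pow_eq_zero_iff (n := 2) (by norm_num) |>.mp hc2
end

section
/- (Theorem 3.2 of the paper) Let f(x) = xᵀAx/2 - bᵀx with A symmetric positive definite with eigenvalues in [ℓ, L], ℓ ≥ 0. Let x_k be the linear conjugate gradient iterates from x_0, and define the estimate sequence φ_k with x̄_k := x_k: φ_0(x) = f(x_0) + (L/2)‖x - x_0‖², γ_0 = L, θ_k the positive root of Lθ² + (γ_k-ℓ)θ - γ_k = 0, γ_{k+1} = (1-θ_k)γ_k + θ_kℓ, and φ_{k+1}* given by the estimate-sequence recursion. Then f(x_k) ≤ φ_k* for every k ≥ 0. -/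
/-!
Conjugate gradient minimizes `f` over `x₀ + span {∇f(x₀), …, ∇f(x_{k-1})}`, so `∇f(x_k)`
is orthogonal to that span, which also contains `v_k - x₀`. Hence the cross term
`⟪∇f(x_k), v_k - x_k⟫` of the recursion for `φ*` vanishes. Moreover the gradient step
`x_k - ∇f(x_k) / L` lies in the next affine search space, so
`f(x_{k+1}) ≤ f(x_k) - ‖∇f(x_k)‖² / (2L)`. Since `γ_{k+1} = L θ_k²`, this is exactly the
gradient term of the recursion, and the remaining terms are nonnegative because `θ_k ≤ 1`
and `f(x_k) ≤ φ_k*`.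
-/

open RealInnerProductSpace

section Quadratic

variable {E : Type*} [NormedAddCommGroup E] [InnerProductSpace ℝ E]
  {A : E →ₗ[ℝ] E} {b : E} {f : E → ℝ}

theorem quadratic_add (hsym : ∀ x y, ⟪A x, y⟫ = ⟪x, A y⟫)
    (hf : ∀ x, f x = ⟪x, A x⟫ / 2 - ⟪b, x⟫) (y h : E) :
    f (y + h) = f y + ⟪A y - b, h⟫ + ⟪h, A h⟫ / 2 := by
  simp only [hf, map_add, inner_add_left, inner_add_right, inner_sub_left]
  rw [← hsym y h, real_inner_comm (A y) h]
  ring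

theorem quadratic_add_smul (hsym : ∀ x y, ⟪A x, y⟫ = ⟪x, A y⟫)
    (hf : ∀ x, f x = ⟪x, A x⟫ / 2 - ⟪b, x⟫) (y h : E) (t : ℝ) :
    f (y + t • h) = f y + t * ⟪A y - b, h⟫ + t ^ 2 * ⟪h, A h⟫ / 2 := by
  rw [quadratic_add hsym hf, map_smul, inner_smul_right, inner_smul_left, inner_smul_right]
  simp only [conj_trivial]
  ring

theorem inner_grad_eq_zero_of_le_add (hsym : ∀ x y, ⟪A x, y⟫ = ⟪x, A y⟫)
    (hf : ∀ x, f x = ⟪x, A x⟫ / 2 - ⟪b, x⟫)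
    {S : Submodule ℝ E} {y : E} (hmin : ∀ w ∈ S, f y ≤ f (y + w)) {w : E} (hw : w ∈ S) :
    ⟪A y - b, w⟫ = 0 := by
  have hquad : ∀ t : ℝ, 0 ≤ ⟪w, A w⟫ / 2 * (t * t) + ⟪A y - b, w⟫ * t + 0 := by
    intro t
    have := hmin (t • w) (S.smul_mem t hw)
    rw [quadratic_add_smul hsym hf] at this
    linarith
  have hdiscr := discrim_le_zero hquad
  rw [discrim] at hdiscr
  nlinarith [sq_nonneg ⟪A y - b, w⟫]

theorem quadratic_sub_smul_grad_le (hsym : ∀ x y, ⟪A x, y⟫ = ⟪x, A y⟫)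
    (hf : ∀ x, f x = ⟪x, A x⟫ / 2 - ⟪b, x⟫) {L : ℝ} (hL : 0 < L)
    (hAL : ∀ h, ⟪h, A h⟫ ≤ L * ‖h‖ ^ 2) (y : E) :
    f (y - L⁻¹ • (A y - b)) ≤ f y - ‖A y - b‖ ^ 2 / (2 * L) := by
  rw [sub_eq_add_neg, ← neg_smul, quadratic_add_smul hsym hf, real_inner_self_eq_norm_sq]
  have hcurv : L⁻¹ ^ 2 * ⟪A y - b, A (A y - b)⟫ ≤ L⁻¹ * ‖A y - b‖ ^ 2 :=
    calc L⁻¹ ^ 2 * ⟪A y - b, A (A y - b)⟫ ≤ L⁻¹ ^ 2 * (L * ‖A y - b‖ ^ 2) := by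
          gcongr; exact hAL _
      _ = L⁻¹ * ‖A y - b‖ ^ 2 := by field_simp
  have hdiv : ‖A y - b‖ ^ 2 / (2 * L) = L⁻¹ * ‖A y - b‖ ^ 2 / 2 := by ring
  rw [neg_sq, hdiv]
  linarith

end Quadratic

theorem Submodule.inv_smul_combination_sub_mem {E : Type*} [AddCommGroup E] [Module ℝ E]
    {S : Submodule ℝ E} {a c t γ : ℝ} {u v w z : E} (hγ : γ = a + c) (hγ0 : γ ≠ 0)
    (hu : u - z ∈ S) (hv : v - z ∈ S) (hw : w ∈ S) :
    γ⁻¹ • (a • u + c • v - t • w) - z ∈ S := by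
  have hcomb : γ⁻¹ • (a • u + c • v - t • w) - z
      = γ⁻¹ • (a • (u - z) + c • (v - z) - t • w) := by
    calc γ⁻¹ • (a • u + c • v - t • w) - z
        = γ⁻¹ • (a • u + c • v - t • w) - γ⁻¹ • (γ • z) := by
          rw [smul_smul, inv_mul_cancel₀ hγ0, one_smul]
      _ = γ⁻¹ • (a • (u - z) + c • (v - z) - t • w) := by
          rw [hγ]; module
  rw [hcomb]
  exact S.smul_mem _ (sub_mem (add_mem (S.smul_mem _ hu) (S.smul_mem _ hv)) (S.smul_mem _ hw))

section ConjugateGradient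

variable {E : Type*} [NormedAddCommGroup E] [InnerProductSpace ℝ E]

def gradientSpan (A : E →ₗ[ℝ] E) (b : E) (x : ℕ → E) (k : ℕ) : Submodule ℝ E :=
  Submodule.span ℝ {w | ∃ i < k, w = A (x i) - b}

variable {A : E →ₗ[ℝ] E} {b : E} {x : ℕ → E}

theorem gradientSpan_le_succ (k : ℕ) : gradientSpan A b x k ≤ gradientSpan A b x (k + 1) :=
  Submodule.span_mono fun _ ⟨i, hi, hw⟩ => ⟨i, Nat.lt_succ_of_lt hi, hw⟩

theorem grad_mem_gradientSpan_succ (k : ℕ) : A (x k) - b ∈ gradientSpan A b x (k + 1) :=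
  Submodule.subset_span ⟨k, Nat.lt_succ_self k, rfl⟩

theorem inner_grad_eq_zero_of_mem_gradientSpan {f : E → ℝ}
    (hsym : ∀ x y, ⟪A x, y⟫ = ⟪x, A y⟫) (hf : ∀ x, f x = ⟪x, A x⟫ / 2 - ⟪b, x⟫)
    {k : ℕ} (hmem : x k - x 0 ∈ gradientSpan A b x k)
    (hmin : ∀ y, y - x 0 ∈ gradientSpan A b x k → f (x k) ≤ f y)
    {w : E} (hw : w ∈ gradientSpan A b x k) : ⟪A (x k) - b, w⟫ = 0 :=
  inner_grad_eq_zero_of_le_add hsym hf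
    (fun w hw => hmin _ (by rw [add_sub_right_comm]; exact add_mem hmem hw)) hw

theorem sub_mem_gradientSpan_of_rec {v : ℕ → E} {θ γ : ℕ → ℝ} {ℓ : ℝ}
    (hmem : ∀ k, x k - x 0 ∈ gradientSpan A b x k) (hγpos : ∀ k, 0 < γ k)
    (hγrec : ∀ k, γ (k + 1) = (1 - θ k) * γ k + θ k * ℓ) (hv0 : v 0 = x 0)
    (hvrec : ∀ k, v (k + 1) = (γ (k + 1))⁻¹ •
      (((1 - θ k) * γ k) • v k + (θ k * ℓ) • x k - (θ k) • (A (x k) - b))) (k : ℕ) :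
    v k - x 0 ∈ gradientSpan A b x k := by
  induction k with
  | zero => rw [hv0, sub_self]; exact zero_mem _
  | succ k ih =>
    rw [hvrec k]
    exact Submodule.inv_smul_combination_sub_mem (hγrec k) (hγpos (k + 1)).ne'
      (gradientSpan_le_succ k ih) (gradientSpan_le_succ k (hmem k))
      (grad_mem_gradientSpan_succ k)

end ConjugateGradient

theorem le_of_inner_self_bounds {E : Type*} [NormedAddCommGroup E]
    [InnerProductSpace ℝ E] [Nontrivial E] {A : E →ₗ[ℝ] E} {ℓ L : ℝ}
    (heig : ∀ x, ℓ * ‖x‖ ^ 2 ≤ ⟪x, A x⟫ ∧ ⟪x, A x⟫ ≤ L * ‖x‖ ^ 2) : ℓ ≤ L := by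
  obtain ⟨e, he⟩ := exists_ne (0 : E)
  exact le_of_mul_le_mul_right ((heig e).1.trans (heig e).2) (by positivity)

theorem eq_mul_sq_of_quadratic_eq_zero {L ℓ γ γ' θ : ℝ}
    (hroot : L * θ ^ 2 + (γ - ℓ) * θ - γ = 0) (hγ' : γ' = (1 - θ) * γ + θ * ℓ) :
    γ' = L * θ ^ 2 := by
  rw [hγ']; linear_combination -hroot

theorem le_one_of_quadratic_eq_zero {L ℓ γ θ : ℝ} (hL : 0 ≤ L) (hℓL : ℓ ≤ L) (hγ : 0 < γ)
    (hθ : 0 < θ) (hroot : L * θ ^ 2 + (γ - ℓ) * θ - γ = 0) : θ ≤ 1 := by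
  by_contra! h
  nlinarith [mul_pos hγ (sub_pos.mpr h), mul_nonneg (mul_nonneg hL hθ.le) (sub_pos.mpr h).le,
    mul_nonneg hθ.le (sub_nonneg.mpr hℓL)]

theorem forall_eq_of_eq_weighted_avg {φ θ : ℕ → ℝ} {c : ℝ} (h0 : φ 0 = c)
    (hrec : ∀ k, φ (k + 1) = (1 - θ k) * φ k + θ k * c) (k : ℕ) : φ k = c := by
  induction k with
  | zero => exact h0
  | succ k ih => rw [hrec, ih]; ring

theorem sub_sq_div_le_estimate_rec {L θ γ γ' φ fx G q : ℝ} (hL : 0 < L) (hθ : 0 < θ)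
    (hθ1 : θ ≤ 1) (hγ : 0 < γ) (hγ' : γ' = L * θ ^ 2) (hfx : fx ≤ φ) (hq : 0 ≤ q) :
    fx - G / (2 * L) ≤ (1 - θ) * φ + θ * fx - θ ^ 2 / (2 * γ') * G
      + θ * (1 - θ) * γ / γ' * q := by
  have hgrad : θ ^ 2 / (2 * γ') * G = G / (2 * L) := by
    rw [hγ']; field_simp
  have hcoef : 0 ≤ θ * (1 - θ) * γ / γ' := by
    rw [hγ']; have := sub_nonneg.mpr hθ1; positivity
  nlinarith [mul_nonneg hcoef hq, mul_le_mul_of_nonneg_left hfx (sub_nonneg.mpr hθ1)]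

theorem stmt_10_general (n : ℕ)
    (A : EuclideanSpace ℝ (Fin n) →ₗ[ℝ] EuclideanSpace ℝ (Fin n))
    (b : EuclideanSpace ℝ (Fin n)) (L ℓ : ℝ) (hL : 0 < L) (hℓ : 0 ≤ ℓ)
    (hsym : ∀ x y, ⟪A x, y⟫ = ⟪x, A y⟫)
    (heig : ∀ x, ℓ * ‖x‖ ^ 2 ≤ ⟪x, A x⟫ ∧ ⟪x, A x⟫ ≤ L * ‖x‖ ^ 2)
    (f : EuclideanSpace ℝ (Fin n) → ℝ)
    (hf : ∀ x, f x = ⟪x, A x⟫ / 2 - ⟪b, x⟫)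
    (x : ℕ → EuclideanSpace ℝ (Fin n))
    (hmem : ∀ k, x k - x 0 ∈ Submodule.span ℝ {w | ∃ i < k, w = A (x i) - b})
    (hmin : ∀ k y, y - x 0 ∈ Submodule.span ℝ {w | ∃ i < k, w = A (x i) - b} →
      f (x k) ≤ f y)
    (θ γ : ℕ → ℝ) (v : ℕ → EuclideanSpace ℝ (Fin n)) (φstar : ℕ → ℝ)
    (hγ0 : γ 0 = L)
    (hθ : ∀ k, 0 < θ k ∧ L * θ k ^ 2 + (γ k - ℓ) * θ k - γ k = 0)
    (hγrec : ∀ k, γ (k + 1) = (1 - θ k) * γ k + θ k * ℓ)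
    (hv0 : v 0 = x 0)
    (hvrec : ∀ k, v (k + 1) = (γ (k + 1))⁻¹ •
      (((1 - θ k) * γ k) • v k + (θ k * ℓ) • x k - (θ k) • (A (x k) - b)))
    (hφstar0 : φstar 0 = f (x 0))
    (hφstarrec : ∀ k, φstar (k + 1) = (1 - θ k) * φstar k + θ k * f (x k)
      - θ k ^ 2 / (2 * γ (k + 1)) * ‖A (x k) - b‖ ^ 2
      + (θ k * (1 - θ k) * γ k / γ (k + 1)) *
          (ℓ * ‖x k - v k‖ ^ 2 / 2 + ⟪A (x k) - b, v k - x k⟫)) :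
    ∀ k, f (x k) ≤ φstar k := by
  have hγ_succ : ∀ k, γ (k + 1) = L * θ k ^ 2 := fun k =>
    eq_mul_sq_of_quadratic_eq_zero (hθ k).2 (hγrec k)
  intro k
  -- In dimension `0` the bounds `heig` do not force `ℓ ≤ L`, hence `θ k ≤ 1`, but there
  -- `φstar` is constant.
  rcases subsingleton_or_nontrivial (EuclideanSpace ℝ (Fin n)) with hE | hE
  · have hfx : ∀ j, f (x j) = f (x 0) := fun j => by rw [Subsingleton.elim (x j) (x 0)]
    refine (hfx k).trans_le (forall_eq_of_eq_weighted_avg (θ := θ) hφstar0 (fun j => ?_) k).ge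
    rw [hφstarrec j, hfx j, Subsingleton.elim (A (x j) - b) 0, Subsingleton.elim (x j - v j) 0]
    simp
  have hγpos : ∀ j, 0 < γ j := by
    rintro (_ | j)
    · rw [hγ0]; exact hL
    · rw [hγ_succ j]; exact mul_pos hL (pow_pos (hθ j).1 2)
  have hθ1 : ∀ j, θ j ≤ 1 := fun j =>
    le_one_of_quadratic_eq_zero hL.le (le_of_inner_self_bounds heig) (hγpos j) (hθ j).1 (hθ j).2
  have hvmem := sub_mem_gradientSpan_of_rec hmem hγpos hγrec hv0 hvrec
  induction k with
  | zero => exact hφstar0.ge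
  | succ k ih =>
    have horth : ⟪A (x k) - b, v k - x k⟫ = 0 :=
      inner_grad_eq_zero_of_mem_gradientSpan hsym hf (hmem k) (hmin k)
        (by rw [← sub_sub_sub_cancel_right _ _ (x 0)]; exact sub_mem (hvmem k) (hmem k))
    have hstep_mem : (x k - L⁻¹ • (A (x k) - b)) - x 0 ∈ gradientSpan A b x (k + 1) := by
      rw [sub_right_comm]
      exact sub_mem (gradientSpan_le_succ k (hmem k))
        (Submodule.smul_mem _ _ (grad_mem_gradientSpan_succ k))
    have hdescent : f (x (k + 1)) ≤ f (x k) - ‖A (x k) - b‖ ^ 2 / (2 * L) :=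
      (hmin (k + 1) _ hstep_mem).trans
        (quadratic_sub_smul_grad_le hsym hf hL (fun h => (heig h).2) (x k))
    rw [hφstarrec k, horth, add_zero]
    exact hdescent.trans (sub_sq_div_le_estimate_rec hL (hθ k).1 (hθ1 k) (hγpos k)
      (hγ_succ k) ih (by positivity))

theorem stmt_10 (n : ℕ)
    (A : EuclideanSpace ℝ (Fin n) →ₗ[ℝ] EuclideanSpace ℝ (Fin n))
    (b : EuclideanSpace ℝ (Fin n)) (L ℓ : ℝ) (hL : 0 < L) (hℓ : 0 ≤ ℓ)
    (hsym : ∀ x y, ⟪A x, y⟫ = ⟪x, A y⟫)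
    (hpd : ∀ x, x ≠ 0 → 0 < ⟪x, A x⟫)
    (heig : ∀ x, ℓ * ‖x‖ ^ 2 ≤ ⟪x, A x⟫ ∧ ⟪x, A x⟫ ≤ L * ‖x‖ ^ 2)
    (f : EuclideanSpace ℝ (Fin n) → ℝ)
    (hf : ∀ x, f x = ⟪x, A x⟫ / 2 - ⟪b, x⟫)
    (x : ℕ → EuclideanSpace ℝ (Fin n))
    (hmem : ∀ k, x k - x 0 ∈ Submodule.span ℝ {w | ∃ i < k, w = A (x i) - b})
    (hmin : ∀ k y, y - x 0 ∈ Submodule.span ℝ {w | ∃ i < k, w = A (x i) - b} →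
      f (x k) ≤ f y)
    (θ γ : ℕ → ℝ) (v : ℕ → EuclideanSpace ℝ (Fin n)) (φstar : ℕ → ℝ)
    (hγ0 : γ 0 = L)
    (hθ : ∀ k, 0 < θ k ∧ L * θ k ^ 2 + (γ k - ℓ) * θ k - γ k = 0)
    (hγrec : ∀ k, γ (k + 1) = (1 - θ k) * γ k + θ k * ℓ)
    (hv0 : v 0 = x 0)
    (hvrec : ∀ k, v (k + 1) = (γ (k + 1))⁻¹ •
      (((1 - θ k) * γ k) • v k + (θ k * ℓ) • x k - (θ k) • (A (x k) - b)))
    (hφstar0 : φstar 0 = f (x 0))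
    (hφstarrec : ∀ k, φstar (k + 1) = (1 - θ k) * φstar k + θ k * f (x k)
      - θ k ^ 2 / (2 * γ (k + 1)) * ‖A (x k) - b‖ ^ 2
      + (θ k * (1 - θ k) * γ k / γ (k + 1)) *
          (ℓ * ‖x k - v k‖ ^ 2 / 2 + ⟪A (x k) - b, v k - x k⟫)) :
    ∀ k, f (x k) ≤ φstar k :=
  stmt_10_general n A b L ℓ hL hℓ hsym heig f hf x hmem hmin θ γ v φstar hγ0 hθ hγrec hv0 hvrec
    hφstar0 hφstarrec
end

section
/- Let f(x) = xᵀAx/2 - bᵀx with A symmetric positive definite, and suppose x̂ minimizes f over the affine space x_0 + V for a subspace V. Then for any w ∈ V with wᵀAw > 0, the minimizer of α ↦ f(x̂ + αw) is α* = -∇f(x̂)ᵀw/(wᵀAw), and the point x̂ + α*w minimizes f over x_0 + (V + span{w}), provided w is A-conjugate to V (i.e., wᵀAv = 0 for all v ∈ V). -/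
open RealInnerProductSpace

theorem stmt_15 (n : ℕ)
    (A : EuclideanSpace ℝ (Fin n) →ₗ[ℝ] EuclideanSpace ℝ (Fin n))
    (b : EuclideanSpace ℝ (Fin n))
    (hsym : ∀ x y, ⟪A x, y⟫ = ⟪x, A y⟫)
    (hpd : ∀ x, x ≠ 0 → 0 < ⟪x, A x⟫)
    (f : EuclideanSpace ℝ (Fin n) → ℝ)
    (hf : ∀ x, f x = ⟪x, A x⟫ / 2 - ⟪b, x⟫)
    (V : Submodule ℝ (EuclideanSpace ℝ (Fin n)))
    (x0 xhat : EuclideanSpace ℝ (Fin n))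
    (hxhat : xhat - x0 ∈ V)
    (hmin : ∀ y, y - x0 ∈ V → f xhat ≤ f y)
    (w : EuclideanSpace ℝ (Fin n)) (hw : 0 < ⟪w, A w⟫)
    (hconjV : ∀ v ∈ V, ⟪w, A v⟫ = 0) :
    (∀ β : ℝ, f (xhat + (-⟪A xhat - b, w⟫ / ⟪w, A w⟫) • w) ≤ f (xhat + β • w)) ∧
    (∀ y, y - x0 ∈ V ⊔ Submodule.span ℝ {w} →
      f (xhat + (-⟪A xhat - b, w⟫ / ⟪w, A w⟫) • w) ≤ f y) := by
  have expand : ∀ x d : EuclideanSpace ℝ (Fin n),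
      f (x + d) = f x + ⟪A x - b, d⟫ + ⟪d, A d⟫ / 2 := by
    intro x d
    have h1 : ⟪A x, d⟫ = ⟪x, A d⟫ := hsym x d
    have h2 : ⟪d, A x⟫ = ⟪A x, d⟫ := real_inner_comm _ _
    simp only [hf, map_add, inner_add_left, inner_add_right, inner_sub_left]
    linarith
  have key : ∀ (x : EuclideanSpace ℝ (Fin n)) (t : ℝ) (d : EuclideanSpace ℝ (Fin n)),
      f (x + t • d) = f x + t * ⟪A x - b, d⟫ + t ^ 2 * ⟪d, A d⟫ / 2 := by
    intro x t d
    rw [expand, real_inner_smul_right, map_smul, real_inner_smul_left,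
      real_inner_smul_right]
    ring
  set g : ℝ := ⟪A xhat - b, w⟫ with hg
  set c : ℝ := ⟪w, A w⟫ with hc
  have horth : ∀ u ∈ V, ⟪A xhat - b, u⟫ = 0 := by
    intro u hu
    rcases eq_or_ne u 0 with rfl | hne
    · simp
    have hcu : (0 : ℝ) < ⟪u, A u⟫ := hpd u hne
    set cu : ℝ := ⟪u, A u⟫ with hcu2
    set gu : ℝ := ⟪A xhat - b, u⟫ with hgu
    have hmem : (xhat + (-gu / cu) • u) - x0 ∈ V := by
      have heq : (xhat + (-gu / cu) • u) - x0 = (xhat - x0) + (-gu / cu) • u := by abel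
      rw [heq]
      exact V.add_mem hxhat (V.smul_mem _ hu)
    have h := hmin _ hmem
    rw [key, ← hgu, ← hcu2] at h
    have h2 : (-gu / cu) * gu + (-gu / cu) ^ 2 * cu / 2 = -(gu ^ 2) / (2 * cu) := by
      field_simp
      ring
    have hsq : gu ^ 2 ≤ 0 := by
      have h' : (0 : ℝ) ≤ -(gu ^ 2) / (2 * cu) := by linarith [h2]
      rw [le_div_iff₀ (by linarith : (0:ℝ) < 2 * cu)] at h'
      nlinarith [h']
    have : gu ^ 2 = 0 := le_antisymm hsq (sq_nonneg gu)
    exact pow_eq_zero_iff (by norm_num) |>.mp this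
  have hq : ∀ t : ℝ, -(g ^ 2) / (2 * c) ≤ t * g + t ^ 2 * c / 2 := by
    intro t
    rw [div_le_iff₀ (by linarith)]
    nlinarith [sq_nonneg (t * c + g)]
  have hstar : (-g / c) * g + (-g / c) ^ 2 * c / 2 = -(g ^ 2) / (2 * c) := by
    field_simp
    ring
  constructor
  · intro β
    rw [key, key]
    have := hq β
    linarith
  · intro y hy
    obtain ⟨v, hv, z, hz, hvz⟩ := Submodule.mem_sup.mp hy
    obtain ⟨β, rfl⟩ := Submodule.mem_span_singleton.mp hz
    set u : EuclideanSpace ℝ (Fin n) := v - (xhat - x0) with hu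
    have hu_mem : u ∈ V := V.sub_mem hv hxhat
    have hy2 : y = v + β • w + x0 := by
      have := hvz.symm
      rw [sub_eq_iff_eq_add] at this
      exact this
    have hy3 : y = xhat + (u + β • w) := by
      rw [hy2, hu]; abel
    rw [key, hy3, expand]
    have e1 : ⟪A xhat - b, u + β • w⟫ = β * g := by
      rw [inner_add_right, horth u hu_mem, real_inner_smul_right, ← hg]
      ring
    have e2 : ⟪u + β • w, A (u + β • w)⟫ = ⟪u, A u⟫ + β ^ 2 * c := by
      have h3 : ⟪w, A u⟫ = 0 := hconjV u hu_mem
      have h4 : ⟪u, A w⟫ = 0 := by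
        rw [real_inner_comm, hsym, h3]
      rw [map_add, map_smul, inner_add_left, inner_add_right, inner_add_right,
        real_inner_smul_left, real_inner_smul_right, real_inner_smul_left,
        real_inner_smul_right, h3, h4, ← hc]
      ring
    rw [e1, e2]
    have huA : (0 : ℝ) ≤ ⟪u, A u⟫ := by
      rcases eq_or_ne u 0 with h0 | hne
      · rw [h0]; simp
      · exact (hpd u hne).le
    have := hq β
    linarith
end
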